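/- (Block-triangular invariance of exogeneity tests.) Under the rank condition, let R₁₁ be a nonzero real scalar, R₂₁ ∈ ℝ^G, and R₂₂ an invertible G×G real matrix; set y* := R₁₁·y + Y·R₂₁ and Y* := Y·R₂₂. Then the rank condition holds for the pair (y*, Y*) with the same X₁, X₂, and, denoting by a star the corresponding quantities computed from (y*, Y*): C₁* = R₂₂⁻¹C₁, β̃* − β̂* = R₁₁R₂₂⁻¹(β̃ − β̂), Δ̂* = R₂₂⁻¹Δ̂(R₂₂⁻¹)ᵀ, σ̂*² = R₁₁²σ̂², σ̃*² = R₁₁²σ̃², σ̃₁*² = R₁₁²σ̃₁², σ̃₂*² = R₁₁²σ̃₂²; consequently (whenever the relevant scaling factors are nonzero or covariance matrices invertible, which holds for (y*, Y*) iff it holds for (y, Y)) every exogeneity statistic is invariant: T_i* = T_i for i = 1, 2, 3, 4, H_j* = H_j for j = 1, 2, 3, and R* = R. -/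

import Mathlib

open Matrix

variable {T G k₁ k₂ : ℕ}

/-- Orthogonal projection `P̄[A] = A(AᵀA)⁻¹Aᵀ` onto the column space of `A`. -/
noncomputable def projM {n : Type*} [Fintype n] [DecidableEq n]
    (A : Matrix (Fin T) n ℝ) : Matrix (Fin T) (Fin T) ℝ :=
  A * (Aᵀ * A)⁻¹ * Aᵀ

/-- The annihilator `M̄[A] = I - P̄[A]`. -/
noncomputable def annM {n : Type*} [Fintype n] [DecidableEq n]
    (A : Matrix (Fin T) n ℝ) : Matrix (Fin T) (Fin T) ℝ :=
  1 - projM A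

noncomputable def M1 (X₁ : Matrix (Fin T) (Fin k₁) ℝ) : Matrix (Fin T) (Fin T) ℝ :=
  annM X₁

noncomputable def Pm (X₁ : Matrix (Fin T) (Fin k₁) ℝ) (X₂ : Matrix (Fin T) (Fin k₂) ℝ) :
    Matrix (Fin T) (Fin T) ℝ :=
  projM (fromCols X₁ X₂)

noncomputable def Mm (X₁ : Matrix (Fin T) (Fin k₁) ℝ) (X₂ : Matrix (Fin T) (Fin k₂) ℝ) :
    Matrix (Fin T) (Fin T) ℝ :=
  annM (fromCols X₁ X₂)

noncomputable def N1 (X₁ : Matrix (Fin T) (Fin k₁) ℝ) (X₂ : Matrix (Fin T) (Fin k₂) ℝ) :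
    Matrix (Fin T) (Fin T) ℝ :=
  M1 X₁ * Pm X₁ X₂

noncomputable def B1 (Y : Matrix (Fin T) (Fin G) ℝ) (X₁ : Matrix (Fin T) (Fin k₁) ℝ) :
    Matrix (Fin G) (Fin T) ℝ :=
  (Yᵀ * M1 X₁ * Y)⁻¹ * (Yᵀ * M1 X₁)

noncomputable def B2 (Y : Matrix (Fin T) (Fin G) ℝ) (X₁ : Matrix (Fin T) (Fin k₁) ℝ)
    (X₂ : Matrix (Fin T) (Fin k₂) ℝ) : Matrix (Fin G) (Fin T) ℝ :=
  (Yᵀ * N1 X₁ X₂ * Y)⁻¹ * (Yᵀ * N1 X₁ X₂)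

noncomputable def C1 (Y : Matrix (Fin T) (Fin G) ℝ) (X₁ : Matrix (Fin T) (Fin k₁) ℝ)
    (X₂ : Matrix (Fin T) (Fin k₂) ℝ) : Matrix (Fin G) (Fin T) ℝ :=
  B2 Y X₁ X₂ - B1 Y X₁

/-- OLS estimator `β̂`. -/
noncomputable def betaOLS (y : Fin T → ℝ) (Y : Matrix (Fin T) (Fin G) ℝ)
    (X₁ : Matrix (Fin T) (Fin k₁) ℝ) : Fin G → ℝ :=
  B1 Y X₁ *ᵥ y

/-- 2SLS estimator `β̃`. -/
noncomputable def beta2S (y : Fin T → ℝ) (Y : Matrix (Fin T) (Fin G) ℝ)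
    (X₁ : Matrix (Fin T) (Fin k₁) ℝ) (X₂ : Matrix (Fin T) (Fin k₂) ℝ) : Fin G → ℝ :=
  B2 Y X₁ X₂ *ᵥ y

noncomputable def OmIV (Y : Matrix (Fin T) (Fin G) ℝ) (X₁ : Matrix (Fin T) (Fin k₁) ℝ)
    (X₂ : Matrix (Fin T) (Fin k₂) ℝ) : Matrix (Fin G) (Fin G) ℝ :=
  (T : ℝ)⁻¹ • (Yᵀ * N1 X₁ X₂ * Y)

noncomputable def OmLS (Y : Matrix (Fin T) (Fin G) ℝ) (X₁ : Matrix (Fin T) (Fin k₁) ℝ) :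
    Matrix (Fin G) (Fin G) ℝ :=
  (T : ℝ)⁻¹ • (Yᵀ * M1 X₁ * Y)

noncomputable def SigV (Y : Matrix (Fin T) (Fin G) ℝ) (X₁ : Matrix (Fin T) (Fin k₁) ℝ)
    (X₂ : Matrix (Fin T) (Fin k₂) ℝ) : Matrix (Fin G) (Fin G) ℝ :=
  (T : ℝ)⁻¹ • (Yᵀ * Mm X₁ X₂ * Y)

noncomputable def Dhat (Y : Matrix (Fin T) (Fin G) ℝ) (X₁ : Matrix (Fin T) (Fin k₁) ℝ)
    (X₂ : Matrix (Fin T) (Fin k₂) ℝ) : Matrix (Fin G) (Fin G) ℝ :=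
  (OmIV Y X₁ X₂)⁻¹ - (OmLS Y X₁)⁻¹

noncomputable def Psi0 (Y : Matrix (Fin T) (Fin G) ℝ) (X₁ : Matrix (Fin T) (Fin k₁) ℝ)
    (X₂ : Matrix (Fin T) (Fin k₂) ℝ) : Matrix (Fin T) (Fin T) ℝ :=
  (C1 Y X₁ X₂)ᵀ * (Dhat Y X₁ X₂)⁻¹ * C1 Y X₁ X₂

noncomputable def N2 (Y : Matrix (Fin T) (Fin G) ℝ) (X₁ : Matrix (Fin T) (Fin k₁) ℝ)
    (X₂ : Matrix (Fin T) (Fin k₂) ℝ) : Matrix (Fin T) (Fin T) ℝ :=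
  1 - M1 X₁ * Y * B2 Y X₁ X₂

noncomputable def Lam1 (Y : Matrix (Fin T) (Fin G) ℝ) (X₁ : Matrix (Fin T) (Fin k₁) ℝ)
    (X₂ : Matrix (Fin T) (Fin k₂) ℝ) : Matrix (Fin T) (Fin T) ℝ :=
  (T : ℝ)⁻¹ • (N1 X₁ X₂ * annM (N1 X₁ X₂ * Y) * N1 X₁ X₂)

noncomputable def Lam2 (Y : Matrix (Fin T) (Fin G) ℝ) (X₁ : Matrix (Fin T) (Fin k₁) ℝ)
    (X₂ : Matrix (Fin T) (Fin k₂) ℝ) : Matrix (Fin T) (Fin T) ℝ :=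
  M1 X₁ * ((T : ℝ)⁻¹ • annM (M1 X₁ * Y) - Psi0 Y X₁ X₂) * M1 X₁

noncomputable def Lam3 (Y : Matrix (Fin T) (Fin G) ℝ) (X₁ : Matrix (Fin T) (Fin k₁) ℝ)
    (X₂ : Matrix (Fin T) (Fin k₂) ℝ) : Matrix (Fin T) (Fin T) ℝ :=
  (T : ℝ)⁻¹ • (M1 X₁ * (N2 Y X₁ X₂)ᵀ * N2 Y X₁ X₂ * M1 X₁)

noncomputable def Lam4 (Y : Matrix (Fin T) (Fin G) ℝ) (X₁ : Matrix (Fin T) (Fin k₁) ℝ) :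
    Matrix (Fin T) (Fin T) ℝ :=
  (T : ℝ)⁻¹ • (M1 X₁ * annM (M1 X₁ * Y) * M1 X₁)

def Ybar (Y : Matrix (Fin T) (Fin G) ℝ) (X₁ : Matrix (Fin T) (Fin k₁) ℝ) :
    Matrix (Fin T) (Fin G ⊕ Fin k₁) ℝ :=
  fromCols Y X₁

def Zfull (Y : Matrix (Fin T) (Fin G) ℝ) (X₁ : Matrix (Fin T) (Fin k₁) ℝ)
    (X₂ : Matrix (Fin T) (Fin k₂) ℝ) : Matrix (Fin T) (Fin G ⊕ (Fin k₁ ⊕ Fin k₂)) ℝ :=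
  fromCols Y (fromCols X₁ X₂)

noncomputable def PsiR (Y : Matrix (Fin T) (Fin G) ℝ) (X₁ : Matrix (Fin T) (Fin k₁) ℝ)
    (X₂ : Matrix (Fin T) (Fin k₂) ℝ) : Matrix (Fin T) (Fin T) ℝ :=
  (T : ℝ)⁻¹ • (annM (Ybar Y X₁) - annM (Zfull Y X₁ X₂))

noncomputable def LamR (Y : Matrix (Fin T) (Fin G) ℝ) (X₁ : Matrix (Fin T) (Fin k₁) ℝ)
    (X₂ : Matrix (Fin T) (Fin k₂) ℝ) : Matrix (Fin T) (Fin T) ℝ :=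
  (T : ℝ)⁻¹ • annM (Zfull Y X₁ X₂)

/-- `σ̂² = (1/T)(y−Yβ̂)ᵀM₁(y−Yβ̂)`. -/
noncomputable def sigHat2 (y : Fin T → ℝ) (Y : Matrix (Fin T) (Fin G) ℝ)
    (X₁ : Matrix (Fin T) (Fin k₁) ℝ) : ℝ :=
  (T : ℝ)⁻¹ * ((y - Y *ᵥ betaOLS y Y X₁) ⬝ᵥ (M1 X₁ *ᵥ (y - Y *ᵥ betaOLS y Y X₁)))

/-- `σ̃² = (1/T)(y−Yβ̃)ᵀM₁(y−Yβ̃)`. -/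
noncomputable def sigTil2 (y : Fin T → ℝ) (Y : Matrix (Fin T) (Fin G) ℝ)
    (X₁ : Matrix (Fin T) (Fin k₁) ℝ) (X₂ : Matrix (Fin T) (Fin k₂) ℝ) : ℝ :=
  (T : ℝ)⁻¹ * ((y - Y *ᵥ beta2S y Y X₁ X₂) ⬝ᵥ (M1 X₁ *ᵥ (y - Y *ᵥ beta2S y Y X₁ X₂)))

/-- `σ̃₁² = (1/T)(y−Yβ̃)ᵀN₁(y−Yβ̃)`. -/
noncomputable def sigTil1sq (y : Fin T → ℝ) (Y : Matrix (Fin T) (Fin G) ℝ)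
    (X₁ : Matrix (Fin T) (Fin k₁) ℝ) (X₂ : Matrix (Fin T) (Fin k₂) ℝ) : ℝ :=
  (T : ℝ)⁻¹ * ((y - Y *ᵥ beta2S y Y X₁ X₂) ⬝ᵥ (N1 X₁ X₂ *ᵥ (y - Y *ᵥ beta2S y Y X₁ X₂)))

/-- `σ̃₂² = σ̂² − (β̃−β̂)ᵀΔ̂⁻¹(β̃−β̂)`. -/
noncomputable def sigTil2sq (y : Fin T → ℝ) (Y : Matrix (Fin T) (Fin G) ℝ)
    (X₁ : Matrix (Fin T) (Fin k₁) ℝ) (X₂ : Matrix (Fin T) (Fin k₂) ℝ) : ℝ :=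
  sigHat2 y Y X₁ -
    (beta2S y Y X₁ X₂ - betaOLS y Y X₁) ⬝ᵥ
      ((Dhat Y X₁ X₂)⁻¹ *ᵥ (beta2S y Y X₁ X₂ - betaOLS y Y X₁))

/-- The rank condition: `X₁`, `X = [X₁, X₂]`, `[Y, X]` and `[P̄[X]Y, X₁]` all have
full column rank. -/
def RankCond (Y : Matrix (Fin T) (Fin G) ℝ) (X₁ : Matrix (Fin T) (Fin k₁) ℝ)
    (X₂ : Matrix (Fin T) (Fin k₂) ℝ) : Prop :=
  X₁.rank = k₁ ∧ (fromCols X₁ X₂).rank = k₁ + k₂ ∧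
    (fromCols Y (fromCols X₁ X₂)).rank = G + (k₁ + k₂) ∧
    (fromCols (Pm X₁ X₂ * Y) X₁).rank = G + k₁

/-!
Replacing `Y` by `Y R₂₂` multiplies `[Y, X₁]` and `[Y, X]` on the right by the invertible block
matrix `diag(R₂₂, I)`, so the projections onto their column spaces, and hence `Ψ_R` and `Λ_R`,
do not change. The coefficient maps `B₁, B₂` are weighted least-squares maps `(YᵀWY)⁻¹YᵀW` and
become `R₂₂⁻¹B₁, R₂₂⁻¹B₂`; since `BᵢY = I`, the added `YR₂₁` is absorbed by the coefficients and
every residual `y − Yβ` is just multiplied by `R₁₁`. So all variance estimates scale by `R₁₁²`,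
`β̃ − β̂` by `R₁₁R₂₂⁻¹` and `Δ̂` by the congruence `R₂₂⁻¹ · R₂₂⁻ᵀ`, under which each Wald form
`dᵀΣ⁻¹d` is invariant.
-/

section Projection

variable {n o : Type*} [Fintype n] [DecidableEq n] [Fintype o]

lemma projM_transpose (A : Matrix (Fin T) n ℝ) : (projM A)ᵀ = projM A := by
  simp only [projM, transpose_mul, transpose_transpose, transpose_nonsing_inv, Matrix.mul_assoc]

lemma annM_transpose (A : Matrix (Fin T) n ℝ) : (annM A)ᵀ = annM A := by
  rw [annM, transpose_sub, transpose_one, projM_transpose]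

lemma projM_mul_self (A : Matrix (Fin T) n ℝ) (hA : IsUnit (Aᵀ * A)) : projM A * A = A := by
  rw [projM, Matrix.mul_assoc, Matrix.mul_assoc,
    nonsing_inv_mul _ ((isUnit_iff_isUnit_det _).mp hA), Matrix.mul_one]

lemma projM_fromCols_mul_left [DecidableEq o] (A : Matrix (Fin T) n ℝ) (B : Matrix (Fin T) o ℝ)
    (hAB : IsUnit ((fromCols A B)ᵀ * fromCols A B)) : projM (fromCols A B) * A = A := by
  have h := projM_mul_self _ hAB
  rw [mul_fromCols] at h
  exact (fromCols_inj h).1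

lemma annM_fromCols_mul_left [DecidableEq o] (A : Matrix (Fin T) n ℝ) (B : Matrix (Fin T) o ℝ)
    (hAB : IsUnit ((fromCols A B)ᵀ * fromCols A B)) : annM (fromCols A B) * A = 0 := by
  rw [annM, Matrix.sub_mul, Matrix.one_mul, projM_fromCols_mul_left A B hAB, sub_self]

lemma projM_mul_projM_of_mul_eq [DecidableEq o] (A : Matrix (Fin T) n ℝ)
    (B : Matrix (Fin T) o ℝ) (h : projM B * A = A) : projM B * projM A = projM A := by
  simp only [projM, ← Matrix.mul_assoc] at h ⊢
  rw [h]

lemma projM_mul_projM_self (A : Matrix (Fin T) n ℝ) (hA : IsUnit (Aᵀ * A)) :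
    projM A * projM A = projM A :=
  projM_mul_projM_of_mul_eq A A (projM_mul_self A hA)

lemma annM_mul_annM_self (A : Matrix (Fin T) n ℝ) (hA : IsUnit (Aᵀ * A)) :
    annM A * annM A = annM A := by
  simp only [annM, Matrix.sub_mul, Matrix.mul_sub, Matrix.one_mul, Matrix.mul_one,
    projM_mul_projM_self A hA]
  abel

lemma projM_mul_of_isUnit_det (A : Matrix (Fin T) n ℝ) {U : Matrix n n ℝ} (hU : IsUnit U.det) :
    projM (A * U) = projM A := by
  have hUT : IsUnit Uᵀ.det := by rwa [det_transpose]
  calc projM (A * U)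
      = A * U * (Uᵀ * (Aᵀ * A) * U)⁻¹ * (Uᵀ * Aᵀ) := by
        simp only [projM, transpose_mul, Matrix.mul_assoc]
    _ = A * (U * U⁻¹) * (Aᵀ * A)⁻¹ * (Uᵀ⁻¹ * Uᵀ) * Aᵀ := by
        rw [Matrix.mul_inv_rev, Matrix.mul_inv_rev]; simp only [Matrix.mul_assoc]
    _ = projM A := by
        rw [mul_nonsing_inv _ hU, nonsing_inv_mul _ hUT, Matrix.mul_one, Matrix.mul_one, projM]

lemma annM_mul_of_isUnit_det (A : Matrix (Fin T) n ℝ) {U : Matrix n n ℝ} (hU : IsUnit U.det) :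
    annM (A * U) = annM A := by
  rw [annM, annM, projM_mul_of_isUnit_det A hU]

lemma annM_mul_mulVec_eq_zero (A : Matrix (Fin T) n ℝ) (B : Matrix (Fin T) o ℝ)
    (hBA : ∀ v, fromCols B A *ᵥ v = 0 → v = 0) (v : o → ℝ) (hv : (annM A * B) *ᵥ v = 0) :
    v = 0 := by
  have h : fromCols B A *ᵥ Sum.elim v (-(((Aᵀ * A)⁻¹ * Aᵀ * B) *ᵥ v)) = 0 := by
    rw [← hv, fromCols_mulVec_sumElim, mulVec_neg, mulVec_mulVec, annM, projM, Matrix.sub_mul,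
      Matrix.one_mul, sub_mulVec, sub_eq_add_neg]
    simp only [Matrix.mul_assoc]
  funext i
  exact congrFun (hBA _ h) (Sum.inl i)

end Projection

section LeastSquares

lemma mulVec_eq_zero_of_rank_eq_card {m n : Type*} [Fintype n] (A : Matrix m n ℝ)
    (hA : A.rank = Fintype.card n) (v : n → ℝ) (hv : A *ᵥ v = 0) : v = 0 := by
  have hker : Module.finrank ℝ (LinearMap.ker A.mulVecLin) = 0 := by
    have := LinearMap.finrank_range_add_finrank_ker A.mulVecLin
    rw [Module.finrank_pi, ← Matrix.rank, hA] at this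
    omega
  rw [Submodule.finrank_eq_zero, ker_mulVecLin_eq_bot_iff] at hker
  exact hker v hv

lemma transpose_mul_mul_eq_of_idempotent {m n : Type*} [Fintype m] (W : Matrix m m ℝ)
    (hW : Wᵀ = W) (hWW : W * W = W) (Y : Matrix m n ℝ) : Yᵀ * W * Y = (W * Y)ᵀ * (W * Y) := by
  rw [transpose_mul, hW, ← Matrix.mul_assoc (Yᵀ * W), Matrix.mul_assoc Yᵀ W W, hWW]

variable {m n : Type*} [Fintype m] [Fintype n] [DecidableEq n]

lemma isUnit_transpose_mul_self (A : Matrix m n ℝ) (hA : ∀ v, A *ᵥ v = 0 → v = 0) :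
    IsUnit (Aᵀ * A) := by
  rw [← mulVec_injective_iff_isUnit, ← coe_mulVecLin, ← LinearMap.ker_eq_bot,
    ker_mulVecLin_transpose_mul_self, ker_mulVecLin_eq_bot_iff]
  exact hA

lemma inv_transpose_mul_mul (R S : Matrix n n ℝ) : (Rᵀ * S * R)⁻¹ = R⁻¹ * S⁻¹ * R⁻¹ᵀ := by
  rw [Matrix.mul_inv_rev, Matrix.mul_inv_rev, transpose_nonsing_inv, Matrix.mul_assoc]

/-- `B₁` and `B₂` are the cases `W = M₁` and `W = N₁`. -/
noncomputable def wlsCoef (W : Matrix m m ℝ) (Y : Matrix m n ℝ) : Matrix n m ℝ :=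
  (Yᵀ * W * Y)⁻¹ * (Yᵀ * W)

variable {W : Matrix m m ℝ} {Y : Matrix m n ℝ} {R : Matrix n n ℝ}

lemma wlsCoef_mul_self (hY : IsUnit (Yᵀ * W * Y)) : wlsCoef W Y * Y = 1 := by
  rw [wlsCoef, Matrix.mul_assoc, nonsing_inv_mul _ ((isUnit_iff_isUnit_det _).mp hY)]

lemma wlsCoef_mul_right (hR : IsUnit R) : wlsCoef W (Y * R) = R⁻¹ * wlsCoef W Y := by
  have hRT : IsUnit Rᵀ.det := by rwa [det_transpose, ← isUnit_iff_isUnit_det]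
  have hgram : (Y * R)ᵀ * W * (Y * R) = Rᵀ * (Yᵀ * W * Y) * R := by
    simp only [transpose_mul, Matrix.mul_assoc]
  rw [wlsCoef, hgram, inv_transpose_mul_mul, transpose_mul, transpose_nonsing_inv]
  simp only [wlsCoef, Matrix.mul_assoc]
  rw [← Matrix.mul_assoc Rᵀ⁻¹, nonsing_inv_mul _ hRT, Matrix.one_mul]

lemma wlsCoef_mul_right_mulVec (hY : IsUnit (Yᵀ * W * Y)) (hR : IsUnit R) (c : ℝ)
    (y : m → ℝ) (r : n → ℝ) :
    wlsCoef W (Y * R) *ᵥ (c • y + Y *ᵥ r) = R⁻¹ *ᵥ (c • (wlsCoef W Y *ᵥ y) + r) := by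
  rw [wlsCoef_mul_right hR, ← mulVec_mulVec, mulVec_add, mulVec_smul, mulVec_mulVec,
    wlsCoef_mul_self hY, one_mulVec]

/-- The shift `Y r` is absorbed by the coefficients because `wlsCoef W Y * Y = 1`. -/
lemma sub_mulVec_wlsCoef_mul_right (hY : IsUnit (Yᵀ * W * Y)) (hR : IsUnit R) (c : ℝ)
    (y : m → ℝ) (r : n → ℝ) :
    c • y + Y *ᵥ r - (Y * R) *ᵥ (wlsCoef W (Y * R) *ᵥ (c • y + Y *ᵥ r))
      = c • (y - Y *ᵥ (wlsCoef W Y *ᵥ y)) := by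
  rw [wlsCoef_mul_right_mulVec hY hR, mulVec_mulVec, Matrix.mul_assoc,
    mul_nonsing_inv _ ((isUnit_iff_isUnit_det _).mp hR), Matrix.mul_one, mulVec_add,
    mulVec_smul, smul_sub]
  abel

end LeastSquares

section QuadraticForm

variable {n : Type*} [Fintype n]

lemma smul_dotProduct_mulVec_smul (c : ℝ) (u : n → ℝ) (M : Matrix n n ℝ) :
    (c • u) ⬝ᵥ (M *ᵥ (c • u)) = c ^ 2 * (u ⬝ᵥ (M *ᵥ u)) := by
  rw [mulVec_smul, smul_dotProduct, dotProduct_smul, smul_eq_mul, smul_eq_mul]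
  ring

lemma nonsing_inv_smul [DecidableEq n] (c : ℝ) (M : Matrix n n ℝ) : (c • M)⁻¹ = c⁻¹ • M⁻¹ := by
  rcases eq_or_ne c 0 with rfl | hc
  · rw [zero_smul, Matrix.inv_zero, _root_.inv_zero, zero_smul]
  by_cases hM : IsUnit M.det
  · exact inv_smul' M (Units.mk0 c hc) hM
  · have hcM : ¬IsUnit (c • M).det := by
      rwa [det_smul, IsUnit.mul_iff, not_and_or, or_iff_right (by simp [hc])]
    rw [nonsing_inv_apply_not_isUnit _ hcM, nonsing_inv_apply_not_isUnit _ hM, smul_zero]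

lemma dotProduct_mulVec_inv_congr [DecidableEq n] {R : Matrix n n ℝ} (hR : IsUnit R)
    (S : Matrix n n ℝ) (d : n → ℝ) :
    (R⁻¹ *ᵥ d) ⬝ᵥ ((R⁻¹ * S * R⁻¹ᵀ)⁻¹ *ᵥ (R⁻¹ *ᵥ d)) = d ⬝ᵥ (S⁻¹ *ᵥ d) := by
  have hRd : IsUnit R.det := (isUnit_iff_isUnit_det R).mp hR
  have hRTd : IsUnit Rᵀ.det := by rwa [det_transpose]
  rw [Matrix.mul_inv_rev, Matrix.mul_inv_rev, transpose_nonsing_inv,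
    nonsing_inv_nonsing_inv _ hRTd, nonsing_inv_nonsing_inv _ hRd, mulVec_mulVec,
    Matrix.mul_assoc, Matrix.mul_assoc, mul_nonsing_inv _ hRd, Matrix.mul_one,
    ← mulVec_mulVec, dotProduct_mulVec, vecMul_transpose, mulVec_mulVec,
    mul_nonsing_inv _ hRd, one_mulVec]

lemma dotProduct_mulVec_inv_smul_congr [DecidableEq n] {c : ℝ} (hc : c ≠ 0)
    {R : Matrix n n ℝ} (hR : IsUnit R) (S : Matrix n n ℝ) (d : n → ℝ) :
    (c • (R⁻¹ *ᵥ d)) ⬝ᵥ ((c ^ 2 • (R⁻¹ * S * R⁻¹ᵀ))⁻¹ *ᵥ (c • (R⁻¹ *ᵥ d)))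
      = d ⬝ᵥ (S⁻¹ *ᵥ d) := by
  rw [nonsing_inv_smul, smul_mulVec, dotProduct_smul, smul_dotProduct_mulVec_smul,
    dotProduct_mulVec_inv_congr hR, smul_eq_mul, ← mul_assoc,
    inv_mul_cancel₀ (pow_ne_zero 2 hc), one_mul]

lemma smul_mul_mul_eq_smul_mul_smul_mul (a b : ℝ) (A S B : Matrix n n ℝ) :
    (a * b) • (A * S * B) = a • (A * (b • S) * B) := by
  rw [Matrix.mul_smul, Matrix.smul_mul, smul_smul]

lemma smul_add_dotProduct_mulVec_smul_add (c : ℝ) (y b : n → ℝ) {Ψ : Matrix n n ℝ}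
    (hΨ : Ψᵀ = Ψ) (hb : Ψ *ᵥ b = 0) :
    (c • y + b) ⬝ᵥ (Ψ *ᵥ (c • y + b)) = c ^ 2 * (y ⬝ᵥ (Ψ *ᵥ y)) := by
  have hbΨ : ∀ u, b ⬝ᵥ (Ψ *ᵥ u) = 0 := fun u ↦ by
    rw [dotProduct_mulVec, ← hΨ, vecMul_transpose, hb, zero_dotProduct]
  rw [mulVec_add, hb, add_zero, add_dotProduct, hbΨ, add_zero, smul_dotProduct_mulVec_smul]

end QuadraticForm

section BlockColumns

variable {m n o : Type*} [Fintype n] [Fintype o] [DecidableEq o]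

lemma fromCols_mul_left_eq (A : Matrix m n ℝ) (B : Matrix m o ℝ) (R : Matrix n n ℝ) :
    fromCols (A * R) B = fromCols A B * (fromBlocks R 0 0 1 : Matrix (n ⊕ o) (n ⊕ o) ℝ) := by
  simp [fromCols_mul_fromBlocks]

lemma isUnit_det_fromBlocks_one [DecidableEq n] {R : Matrix n n ℝ} (hR : IsUnit R) :
    IsUnit (fromBlocks R 0 0 (1 : Matrix o o ℝ)).det := by
  rwa [det_fromBlocks_zero₂₁, det_one, mul_one, ← isUnit_iff_isUnit_det]

lemma rank_fromCols_mul_left [DecidableEq n] (A : Matrix m n ℝ) (B : Matrix m o ℝ)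
    {R : Matrix n n ℝ} (hR : IsUnit R) : (fromCols (A * R) B).rank = (fromCols A B).rank := by
  rw [fromCols_mul_left_eq, rank_mul_eq_left_of_isUnit_det _ _ (isUnit_det_fromBlocks_one hR)]

lemma annM_fromCols_mul_left_eq [DecidableEq n] (A : Matrix (Fin T) n ℝ)
    (B : Matrix (Fin T) o ℝ) {R : Matrix n n ℝ} (hR : IsUnit R) :
    annM (fromCols (A * R) B) = annM (fromCols A B) := by
  rw [fromCols_mul_left_eq, annM_mul_of_isUnit_det _ (isUnit_det_fromBlocks_one hR)]

end BlockColumns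

namespace RankCond

variable {Y : Matrix (Fin T) (Fin G) ℝ} {X₁ : Matrix (Fin T) (Fin k₁) ℝ}
  {X₂ : Matrix (Fin T) (Fin k₂) ℝ}

lemma isUnit_gram_X₁ (h : RankCond Y X₁ X₂) : IsUnit (X₁ᵀ * X₁) :=
  isUnit_transpose_mul_self _ (mulVec_eq_zero_of_rank_eq_card _ (by simpa using h.1))

lemma isUnit_gram_X (h : RankCond Y X₁ X₂) :
    IsUnit ((fromCols X₁ X₂)ᵀ * fromCols X₁ X₂) :=
  isUnit_transpose_mul_self _ (mulVec_eq_zero_of_rank_eq_card _ (by simpa using h.2.1))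

lemma mulVec_Zfull_eq_zero (h : RankCond Y X₁ X₂) (v : Fin G ⊕ (Fin k₁ ⊕ Fin k₂) → ℝ)
    (hv : Zfull Y X₁ X₂ *ᵥ v = 0) : v = 0 :=
  mulVec_eq_zero_of_rank_eq_card _ (by simpa [Zfull] using h.2.2.1) v hv

lemma mulVec_Ybar_eq_zero (h : RankCond Y X₁ X₂) (v : Fin G ⊕ Fin k₁ → ℝ)
    (hv : Ybar Y X₁ *ᵥ v = 0) : v = 0 := by
  have hpad : Zfull Y X₁ X₂ *ᵥ Sum.elim (v ∘ Sum.inl) (Sum.elim (v ∘ Sum.inr) 0) = 0 := by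
    rw [← hv, Zfull, Ybar, ← Sum.elim_comp_inl_inr v, fromCols_mulVec_sumElim,
      fromCols_mulVec_sumElim, fromCols_mulVec_sumElim, mulVec_zero, add_zero]
    simp
  have h0 := h.mulVec_Zfull_eq_zero _ hpad
  funext i
  cases i with
  | inl i => exact congrFun h0 (Sum.inl i)
  | inr j => exact congrFun h0 (Sum.inr (Sum.inl j))

lemma Pm_mul_X₁ (h : RankCond Y X₁ X₂) : Pm X₁ X₂ * X₁ = X₁ :=
  projM_fromCols_mul_left X₁ X₂ h.isUnit_gram_X

lemma Pm_mul_projM (h : RankCond Y X₁ X₂) : Pm X₁ X₂ * projM X₁ = projM X₁ :=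
  projM_mul_projM_of_mul_eq _ _ h.Pm_mul_X₁

lemma projM_mul_Pm (h : RankCond Y X₁ X₂) : projM X₁ * Pm X₁ X₂ = projM X₁ := by
  simpa only [transpose_mul, Pm, projM_transpose] using congrArg transpose h.Pm_mul_projM

lemma N1_eq (h : RankCond Y X₁ X₂) : N1 X₁ X₂ = Pm X₁ X₂ - projM X₁ := by
  rw [N1, M1, annM, Matrix.sub_mul, Matrix.one_mul, h.projM_mul_Pm]

lemma N1_transpose (h : RankCond Y X₁ X₂) : (N1 X₁ X₂)ᵀ = N1 X₁ X₂ := by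
  rw [h.N1_eq, transpose_sub, Pm, projM_transpose, projM_transpose]

lemma N1_mul_self (h : RankCond Y X₁ X₂) : N1 X₁ X₂ * N1 X₁ X₂ = N1 X₁ X₂ := by
  have hPP : Pm X₁ X₂ * Pm X₁ X₂ = Pm X₁ X₂ := projM_mul_projM_self _ h.isUnit_gram_X
  rw [h.N1_eq]
  simp only [Matrix.sub_mul, Matrix.mul_sub, hPP, h.Pm_mul_projM, h.projM_mul_Pm,
    projM_mul_projM_self X₁ h.isUnit_gram_X₁]
  abel

lemma isUnit_gram_M1 (h : RankCond Y X₁ X₂) : IsUnit (Yᵀ * M1 X₁ * Y) := by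
  rw [M1, transpose_mul_mul_eq_of_idempotent _ (annM_transpose X₁)
    (annM_mul_annM_self X₁ h.isUnit_gram_X₁)]
  exact isUnit_transpose_mul_self _ (annM_mul_mulVec_eq_zero X₁ Y h.mulVec_Ybar_eq_zero)

/-- `N₁Y = M₁(P̄[X]Y)`, whose full column rank is the last clause of the rank condition. -/
lemma isUnit_gram_N1 (h : RankCond Y X₁ X₂) : IsUnit (Yᵀ * N1 X₁ X₂ * Y) := by
  rw [transpose_mul_mul_eq_of_idempotent _ h.N1_transpose h.N1_mul_self, N1, Matrix.mul_assoc]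
  exact isUnit_transpose_mul_self _ (annM_mul_mulVec_eq_zero X₁ _
    (mulVec_eq_zero_of_rank_eq_card _ (by simpa using h.2.2.2)))

lemma mul_right (h : RankCond Y X₁ X₂) {R : Matrix (Fin G) (Fin G) ℝ} (hR : IsUnit R) :
    RankCond (Y * R) X₁ X₂ := by
  obtain ⟨h₁, h₂, h₃, h₄⟩ := h
  refine ⟨h₁, h₂, ?_, ?_⟩
  · rwa [rank_fromCols_mul_left _ _ hR]
  · rwa [← Matrix.mul_assoc, rank_fromCols_mul_left _ _ hR]

end RankCond

section Transform

variable {Y : Matrix (Fin T) (Fin G) ℝ} {X₁ : Matrix (Fin T) (Fin k₁) ℝ}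
  {X₂ : Matrix (Fin T) (Fin k₂) ℝ} {R : Matrix (Fin G) (Fin G) ℝ}

lemma C1_mul_right (hR : IsUnit R) : C1 (Y * R) X₁ X₂ = R⁻¹ * C1 Y X₁ X₂ := by
  rw [C1, C1, Matrix.mul_sub]
  congr 1 <;> exact wlsCoef_mul_right hR

lemma OmIV_mul_right (R : Matrix (Fin G) (Fin G) ℝ) :
    OmIV (Y * R) X₁ X₂ = Rᵀ * OmIV Y X₁ X₂ * R := by
  simp only [OmIV, transpose_mul, Matrix.mul_smul, Matrix.smul_mul, Matrix.mul_assoc]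

lemma OmLS_mul_right (R : Matrix (Fin G) (Fin G) ℝ) : OmLS (Y * R) X₁ = Rᵀ * OmLS Y X₁ * R := by
  simp only [OmLS, transpose_mul, Matrix.mul_smul, Matrix.smul_mul, Matrix.mul_assoc]

lemma Dhat_mul_right (R : Matrix (Fin G) (Fin G) ℝ) :
    Dhat (Y * R) X₁ X₂ = R⁻¹ * Dhat Y X₁ X₂ * R⁻¹ᵀ := by
  rw [Dhat, Dhat, OmIV_mul_right, OmLS_mul_right, inv_transpose_mul_mul, inv_transpose_mul_mul,
    Matrix.mul_sub, Matrix.sub_mul]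

lemma PsiR_mul_right (hR : IsUnit R) : PsiR (Y * R) X₁ X₂ = PsiR Y X₁ X₂ := by
  rw [PsiR, PsiR, Ybar, Ybar, Zfull, Zfull, annM_fromCols_mul_left_eq _ _ hR,
    annM_fromCols_mul_left_eq _ _ hR]

lemma LamR_mul_right (hR : IsUnit R) : LamR (Y * R) X₁ X₂ = LamR Y X₁ X₂ := by
  rw [LamR, LamR, Zfull, Zfull, annM_fromCols_mul_left_eq _ _ hR]

lemma PsiR_transpose : (PsiR Y X₁ X₂)ᵀ = PsiR Y X₁ X₂ := by
  rw [PsiR, transpose_smul, transpose_sub, annM_transpose, annM_transpose]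

lemma LamR_transpose : (LamR Y X₁ X₂)ᵀ = LamR Y X₁ X₂ := by
  rw [LamR, transpose_smul, annM_transpose]

namespace RankCond

lemma PsiR_mul_Y (h : RankCond Y X₁ X₂) : PsiR Y X₁ X₂ * Y = 0 := by
  rw [PsiR, Ybar, Zfull, Matrix.smul_mul, Matrix.sub_mul,
    annM_fromCols_mul_left _ _ (isUnit_transpose_mul_self _ h.mulVec_Ybar_eq_zero),
    annM_fromCols_mul_left _ _ (isUnit_transpose_mul_self _ h.mulVec_Zfull_eq_zero),
    sub_zero, smul_zero]

lemma LamR_mul_Y (h : RankCond Y X₁ X₂) : LamR Y X₁ X₂ * Y = 0 := by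
  rw [LamR, Zfull, Matrix.smul_mul,
    annM_fromCols_mul_left _ _ (isUnit_transpose_mul_self _ h.mulVec_Zfull_eq_zero), smul_zero]

variable {c : ℝ} {y : Fin T → ℝ} {r : Fin G → ℝ}

lemma betaOLS_transform (h : RankCond Y X₁ X₂) (hR : IsUnit R) :
    betaOLS (c • y + Y *ᵥ r) (Y * R) X₁ = R⁻¹ *ᵥ (c • betaOLS y Y X₁ + r) :=
  wlsCoef_mul_right_mulVec h.isUnit_gram_M1 hR c y r

lemma beta2S_transform (h : RankCond Y X₁ X₂) (hR : IsUnit R) :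
    beta2S (c • y + Y *ᵥ r) (Y * R) X₁ X₂ = R⁻¹ *ᵥ (c • beta2S y Y X₁ X₂ + r) :=
  wlsCoef_mul_right_mulVec h.isUnit_gram_N1 hR c y r

lemma beta2S_sub_betaOLS_transform (h : RankCond Y X₁ X₂) (hR : IsUnit R) :
    beta2S (c • y + Y *ᵥ r) (Y * R) X₁ X₂ - betaOLS (c • y + Y *ᵥ r) (Y * R) X₁
      = c • (R⁻¹ *ᵥ (beta2S y Y X₁ X₂ - betaOLS y Y X₁)) := by
  rw [h.beta2S_transform hR, h.betaOLS_transform hR, ← mulVec_sub, add_sub_add_right_eq_sub,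
    ← smul_sub, mulVec_smul]

lemma residual_betaOLS_transform (h : RankCond Y X₁ X₂) (hR : IsUnit R) :
    c • y + Y *ᵥ r - (Y * R) *ᵥ betaOLS (c • y + Y *ᵥ r) (Y * R) X₁
      = c • (y - Y *ᵥ betaOLS y Y X₁) :=
  sub_mulVec_wlsCoef_mul_right h.isUnit_gram_M1 hR c y r

lemma residual_beta2S_transform (h : RankCond Y X₁ X₂) (hR : IsUnit R) :
    c • y + Y *ᵥ r - (Y * R) *ᵥ beta2S (c • y + Y *ᵥ r) (Y * R) X₁ X₂
      = c • (y - Y *ᵥ beta2S y Y X₁ X₂) :=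
  sub_mulVec_wlsCoef_mul_right h.isUnit_gram_N1 hR c y r

lemma sigHat2_transform (h : RankCond Y X₁ X₂) (hR : IsUnit R) :
    sigHat2 (c • y + Y *ᵥ r) (Y * R) X₁ = c ^ 2 * sigHat2 y Y X₁ := by
  rw [sigHat2, sigHat2, h.residual_betaOLS_transform hR, smul_dotProduct_mulVec_smul]
  ring

lemma sigTil2_transform (h : RankCond Y X₁ X₂) (hR : IsUnit R) :
    sigTil2 (c • y + Y *ᵥ r) (Y * R) X₁ X₂ = c ^ 2 * sigTil2 y Y X₁ X₂ := by
  rw [sigTil2, sigTil2, h.residual_beta2S_transform hR, smul_dotProduct_mulVec_smul]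
  ring

lemma sigTil1sq_transform (h : RankCond Y X₁ X₂) (hR : IsUnit R) :
    sigTil1sq (c • y + Y *ᵥ r) (Y * R) X₁ X₂ = c ^ 2 * sigTil1sq y Y X₁ X₂ := by
  rw [sigTil1sq, sigTil1sq, h.residual_beta2S_transform hR, smul_dotProduct_mulVec_smul]
  ring

lemma sigTil2sq_transform (h : RankCond Y X₁ X₂) (hR : IsUnit R) :
    sigTil2sq (c • y + Y *ᵥ r) (Y * R) X₁ X₂ = c ^ 2 * sigTil2sq y Y X₁ X₂ := by
  rw [sigTil2sq, sigTil2sq, h.sigHat2_transform hR, h.beta2S_sub_betaOLS_transform hR,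
    Dhat_mul_right, smul_dotProduct_mulVec_smul, dotProduct_mulVec_inv_congr hR]
  ring

lemma wald_transform (h : RankCond Y X₁ X₂) (hR : IsUnit R) (hc : c ≠ 0) (s : ℝ) :
    (beta2S (c • y + Y *ᵥ r) (Y * R) X₁ X₂ - betaOLS (c • y + Y *ᵥ r) (Y * R) X₁) ⬝ᵥ
        (((c ^ 2 * s) • Dhat (Y * R) X₁ X₂)⁻¹ *ᵥ
          (beta2S (c • y + Y *ᵥ r) (Y * R) X₁ X₂ - betaOLS (c • y + Y *ᵥ r) (Y * R) X₁))
      = (beta2S y Y X₁ X₂ - betaOLS y Y X₁) ⬝ᵥ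
          ((s • Dhat Y X₁ X₂)⁻¹ *ᵥ (beta2S y Y X₁ X₂ - betaOLS y Y X₁)) := by
  rw [h.beta2S_sub_betaOLS_transform hR, Dhat_mul_right, smul_mul_mul_eq_smul_mul_smul_mul,
    dotProduct_mulVec_inv_smul_congr hc hR]

lemma hausman_transform (h : RankCond Y X₁ X₂) (hR : IsUnit R) (hc : c ≠ 0) (s t : ℝ) :
    (beta2S (c • y + Y *ᵥ r) (Y * R) X₁ X₂ - betaOLS (c • y + Y *ᵥ r) (Y * R) X₁) ⬝ᵥ
        (((c ^ 2 * s) • (OmIV (Y * R) X₁ X₂)⁻¹ - (c ^ 2 * t) • (OmLS (Y * R) X₁)⁻¹)⁻¹ *ᵥ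
          (beta2S (c • y + Y *ᵥ r) (Y * R) X₁ X₂ - betaOLS (c • y + Y *ᵥ r) (Y * R) X₁))
      = (beta2S y Y X₁ X₂ - betaOLS y Y X₁) ⬝ᵥ
          ((s • (OmIV Y X₁ X₂)⁻¹ - t • (OmLS Y X₁)⁻¹)⁻¹ *ᵥ
            (beta2S y Y X₁ X₂ - betaOLS y Y X₁)) := by
  rw [h.beta2S_sub_betaOLS_transform hR, OmIV_mul_right, OmLS_mul_right, inv_transpose_mul_mul,
    inv_transpose_mul_mul, smul_mul_mul_eq_smul_mul_smul_mul, smul_mul_mul_eq_smul_mul_smul_mul,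
    ← smul_sub, ← Matrix.sub_mul, ← Matrix.mul_sub, dotProduct_mulVec_inv_smul_congr hc hR]

lemma PsiR_quadratic_transform (h : RankCond Y X₁ X₂) (hR : IsUnit R) :
    (c • y + Y *ᵥ r) ⬝ᵥ (PsiR (Y * R) X₁ X₂ *ᵥ (c • y + Y *ᵥ r))
      = c ^ 2 * (y ⬝ᵥ (PsiR Y X₁ X₂ *ᵥ y)) := by
  rw [PsiR_mul_right hR, smul_add_dotProduct_mulVec_smul_add c y _ PsiR_transpose
    (by rw [mulVec_mulVec, h.PsiR_mul_Y, zero_mulVec])]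

lemma LamR_quadratic_transform (h : RankCond Y X₁ X₂) (hR : IsUnit R) :
    (c • y + Y *ᵥ r) ⬝ᵥ (LamR (Y * R) X₁ X₂ *ᵥ (c • y + Y *ᵥ r))
      = c ^ 2 * (y ⬝ᵥ (LamR Y X₁ X₂ *ᵥ y)) := by
  rw [LamR_mul_right hR, smul_add_dotProduct_mulVec_smul_add c y _ LamR_transpose
    (by rw [mulVec_mulVec, h.LamR_mul_Y, zero_mulVec])]

end RankCond

end Transform

theorem stmt16_general {T G k₁ k₂ : ℕ}
    (y : Fin T → ℝ) (Y : Matrix (Fin T) (Fin G) ℝ)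
    (X₁ : Matrix (Fin T) (Fin k₁) ℝ) (X₂ : Matrix (Fin T) (Fin k₂) ℝ)
    (hrank : RankCond Y X₁ X₂)
    (R₁₁ : ℝ) (hR₁₁ : R₁₁ ≠ 0) (R₂₁ : Fin G → ℝ)
    (R₂₂ : Matrix (Fin G) (Fin G) ℝ) (hR₂₂ : IsUnit R₂₂)
    (ystar : Fin T → ℝ) (hystar : ystar = R₁₁ • y + Y *ᵥ R₂₁)
    (Ystar : Matrix (Fin T) (Fin G) ℝ) (hYstar : Ystar = Y * R₂₂) :
    RankCond Ystar X₁ X₂ ∧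
    C1 Ystar X₁ X₂ = R₂₂⁻¹ * C1 Y X₁ X₂ ∧
    beta2S ystar Ystar X₁ X₂ - betaOLS ystar Ystar X₁
      = R₁₁ • (R₂₂⁻¹ *ᵥ (beta2S y Y X₁ X₂ - betaOLS y Y X₁)) ∧
    Dhat Ystar X₁ X₂ = R₂₂⁻¹ * Dhat Y X₁ X₂ * (R₂₂⁻¹)ᵀ ∧
    sigHat2 ystar Ystar X₁ = R₁₁ ^ 2 * sigHat2 y Y X₁ ∧
    sigTil2 ystar Ystar X₁ X₂ = R₁₁ ^ 2 * sigTil2 y Y X₁ X₂ ∧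
    sigTil1sq ystar Ystar X₁ X₂ = R₁₁ ^ 2 * sigTil1sq y Y X₁ X₂ ∧
    sigTil2sq ystar Ystar X₁ X₂ = R₁₁ ^ 2 * sigTil2sq y Y X₁ X₂ ∧
    (sigTil1sq y Y X₁ X₂ ≠ 0 →
      ((k₂ : ℝ) - (G : ℝ)) / (G : ℝ) *
          ((beta2S ystar Ystar X₁ X₂ - betaOLS ystar Ystar X₁) ⬝ᵥ
            ((sigTil1sq ystar Ystar X₁ X₂ • Dhat Ystar X₁ X₂)⁻¹ *ᵥ
              (beta2S ystar Ystar X₁ X₂ - betaOLS ystar Ystar X₁)))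
        = ((k₂ : ℝ) - (G : ℝ)) / (G : ℝ) *
            ((beta2S y Y X₁ X₂ - betaOLS y Y X₁) ⬝ᵥ
              ((sigTil1sq y Y X₁ X₂ • Dhat Y X₁ X₂)⁻¹ *ᵥ
                (beta2S y Y X₁ X₂ - betaOLS y Y X₁)))) ∧
    (sigTil2sq y Y X₁ X₂ ≠ 0 →
      ((T : ℝ) - (k₁ : ℝ) - 2 * (G : ℝ)) / (G : ℝ) *
          ((beta2S ystar Ystar X₁ X₂ - betaOLS ystar Ystar X₁) ⬝ᵥ
            ((sigTil2sq ystar Ystar X₁ X₂ • Dhat Ystar X₁ X₂)⁻¹ *ᵥ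
              (beta2S ystar Ystar X₁ X₂ - betaOLS ystar Ystar X₁)))
        = ((T : ℝ) - (k₁ : ℝ) - 2 * (G : ℝ)) / (G : ℝ) *
            ((beta2S y Y X₁ X₂ - betaOLS y Y X₁) ⬝ᵥ
              ((sigTil2sq y Y X₁ X₂ • Dhat Y X₁ X₂)⁻¹ *ᵥ
                (beta2S y Y X₁ X₂ - betaOLS y Y X₁)))) ∧
    (sigTil2 y Y X₁ X₂ ≠ 0 →
      ((T : ℝ) - (k₁ : ℝ) - (G : ℝ)) *
          ((beta2S ystar Ystar X₁ X₂ - betaOLS ystar Ystar X₁) ⬝ᵥ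
            ((sigTil2 ystar Ystar X₁ X₂ • Dhat Ystar X₁ X₂)⁻¹ *ᵥ
              (beta2S ystar Ystar X₁ X₂ - betaOLS ystar Ystar X₁)))
        = ((T : ℝ) - (k₁ : ℝ) - (G : ℝ)) *
            ((beta2S y Y X₁ X₂ - betaOLS y Y X₁) ⬝ᵥ
              ((sigTil2 y Y X₁ X₂ • Dhat Y X₁ X₂)⁻¹ *ᵥ
                (beta2S y Y X₁ X₂ - betaOLS y Y X₁)))) ∧
    (sigHat2 y Y X₁ ≠ 0 →
      ((T : ℝ) - (k₁ : ℝ) - (G : ℝ)) *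
          ((beta2S ystar Ystar X₁ X₂ - betaOLS ystar Ystar X₁) ⬝ᵥ
            ((sigHat2 ystar Ystar X₁ • Dhat Ystar X₁ X₂)⁻¹ *ᵥ
              (beta2S ystar Ystar X₁ X₂ - betaOLS ystar Ystar X₁)))
        = ((T : ℝ) - (k₁ : ℝ) - (G : ℝ)) *
            ((beta2S y Y X₁ X₂ - betaOLS y Y X₁) ⬝ᵥ
              ((sigHat2 y Y X₁ • Dhat Y X₁ X₂)⁻¹ *ᵥ
                (beta2S y Y X₁ X₂ - betaOLS y Y X₁)))) ∧
    (IsUnit (sigTil2 y Y X₁ X₂ • (OmIV Y X₁ X₂)⁻¹ - sigHat2 y Y X₁ • (OmLS Y X₁)⁻¹) →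
      (T : ℝ) *
          ((beta2S ystar Ystar X₁ X₂ - betaOLS ystar Ystar X₁) ⬝ᵥ
            ((sigTil2 ystar Ystar X₁ X₂ • (OmIV Ystar X₁ X₂)⁻¹ -
                sigHat2 ystar Ystar X₁ • (OmLS Ystar X₁)⁻¹)⁻¹ *ᵥ
              (beta2S ystar Ystar X₁ X₂ - betaOLS ystar Ystar X₁)))
        = (T : ℝ) *
            ((beta2S y Y X₁ X₂ - betaOLS y Y X₁) ⬝ᵥ
              ((sigTil2 y Y X₁ X₂ • (OmIV Y X₁ X₂)⁻¹ -
                  sigHat2 y Y X₁ • (OmLS Y X₁)⁻¹)⁻¹ *ᵥ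
                (beta2S y Y X₁ X₂ - betaOLS y Y X₁)))) ∧
    (sigTil2 y Y X₁ X₂ ≠ 0 →
      (T : ℝ) *
          ((beta2S ystar Ystar X₁ X₂ - betaOLS ystar Ystar X₁) ⬝ᵥ
            ((sigTil2 ystar Ystar X₁ X₂ • Dhat Ystar X₁ X₂)⁻¹ *ᵥ
              (beta2S ystar Ystar X₁ X₂ - betaOLS ystar Ystar X₁)))
        = (T : ℝ) *
            ((beta2S y Y X₁ X₂ - betaOLS y Y X₁) ⬝ᵥ
              ((sigTil2 y Y X₁ X₂ • Dhat Y X₁ X₂)⁻¹ *ᵥ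
                (beta2S y Y X₁ X₂ - betaOLS y Y X₁)))) ∧
    (sigHat2 y Y X₁ ≠ 0 →
      (T : ℝ) *
          ((beta2S ystar Ystar X₁ X₂ - betaOLS ystar Ystar X₁) ⬝ᵥ
            ((sigHat2 ystar Ystar X₁ • Dhat Ystar X₁ X₂)⁻¹ *ᵥ
              (beta2S ystar Ystar X₁ X₂ - betaOLS ystar Ystar X₁)))
        = (T : ℝ) *
            ((beta2S y Y X₁ X₂ - betaOLS y Y X₁) ⬝ᵥ
              ((sigHat2 y Y X₁ • Dhat Y X₁ X₂)⁻¹ *ᵥ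
                (beta2S y Y X₁ X₂ - betaOLS y Y X₁)))) ∧
    (y ⬝ᵥ (LamR Y X₁ X₂ *ᵥ y) ≠ 0 →
      ((T : ℝ) - (k₁ : ℝ) - (k₂ : ℝ) - (G : ℝ)) / (k₂ : ℝ) *
          (ystar ⬝ᵥ (PsiR Ystar X₁ X₂ *ᵥ ystar) /
            (ystar ⬝ᵥ (LamR Ystar X₁ X₂ *ᵥ ystar)))
        = ((T : ℝ) - (k₁ : ℝ) - (k₂ : ℝ) - (G : ℝ)) / (k₂ : ℝ) *
            (y ⬝ᵥ (PsiR Y X₁ X₂ *ᵥ y) / (y ⬝ᵥ (LamR Y X₁ X₂ *ᵥ y)))) := by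
  subst hystar hYstar
  refine ⟨hrank.mul_right hR₂₂, C1_mul_right hR₂₂, hrank.beta2S_sub_betaOLS_transform hR₂₂,
    Dhat_mul_right R₂₂, hrank.sigHat2_transform hR₂₂, hrank.sigTil2_transform hR₂₂,
    hrank.sigTil1sq_transform hR₂₂, hrank.sigTil2sq_transform hR₂₂,
    fun _ ↦ ?_, fun _ ↦ ?_, fun _ ↦ ?_, fun _ ↦ ?_, fun _ ↦ ?_, fun _ ↦ ?_, fun _ ↦ ?_, fun _ ↦ ?_⟩
  · rw [hrank.sigTil1sq_transform hR₂₂, hrank.wald_transform hR₂₂ hR₁₁]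
  · rw [hrank.sigTil2sq_transform hR₂₂, hrank.wald_transform hR₂₂ hR₁₁]
  · rw [hrank.sigTil2_transform hR₂₂, hrank.wald_transform hR₂₂ hR₁₁]
  · rw [hrank.sigHat2_transform hR₂₂, hrank.wald_transform hR₂₂ hR₁₁]
  · rw [hrank.sigTil2_transform hR₂₂, hrank.sigHat2_transform hR₂₂,
      hrank.hausman_transform hR₂₂ hR₁₁]
  · rw [hrank.sigTil2_transform hR₂₂, hrank.wald_transform hR₂₂ hR₁₁]
  · rw [hrank.sigHat2_transform hR₂₂, hrank.wald_transform hR₂₂ hR₁₁]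
  · rw [hrank.PsiR_quadratic_transform hR₂₂, hrank.LamR_quadratic_transform hR₂₂,
      mul_div_mul_left _ _ (pow_ne_zero 2 hR₁₁)]

/-- **Block-triangular invariance of exogeneity tests.**  Under the rank condition, let
`R₁₁ ≠ 0` be a scalar, `R₂₁ ∈ ℝ^G`, and `R₂₂` an invertible `G×G` matrix; set
`y* = R₁₁y + YR₂₁` and `Y* = YR₂₂`.  Then the rank condition holds for `(y*, Y*)`,
`C₁* = R₂₂⁻¹C₁`, `β̃* − β̂* = R₁₁R₂₂⁻¹(β̃ − β̂)`, `Δ̂* = R₂₂⁻¹Δ̂(R₂₂⁻¹)ᵀ`,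
`σ̂*² = R₁₁²σ̂²`, `σ̃*² = R₁₁²σ̃²`, `σ̃₁*² = R₁₁²σ̃₁²`, `σ̃₂*² = R₁₁²σ̃₂²`; consequently
(whenever the relevant scaling factors are nonzero or covariance matrices invertible)
every exogeneity statistic is invariant: `T_i* = T_i` (`i = 1,2,3,4`), `H_j* = H_j`
(`j = 1,2,3`), and `R* = R`. -/
theorem stmt16 {T G k₁ k₂ : ℕ}
    (hT : 0 < T) (hG : 0 < G) (hk₁ : 0 < k₁) (hk₂ : 0 < k₂)
    (y : Fin T → ℝ) (Y : Matrix (Fin T) (Fin G) ℝ)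
    (X₁ : Matrix (Fin T) (Fin k₁) ℝ) (X₂ : Matrix (Fin T) (Fin k₂) ℝ)
    (hrank : RankCond Y X₁ X₂)
    (R₁₁ : ℝ) (hR₁₁ : R₁₁ ≠ 0) (R₂₁ : Fin G → ℝ)
    (R₂₂ : Matrix (Fin G) (Fin G) ℝ) (hR₂₂ : IsUnit R₂₂)
    (ystar : Fin T → ℝ) (hystar : ystar = R₁₁ • y + Y *ᵥ R₂₁)
    (Ystar : Matrix (Fin T) (Fin G) ℝ) (hYstar : Ystar = Y * R₂₂) :
    RankCond Ystar X₁ X₂ ∧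
    C1 Ystar X₁ X₂ = R₂₂⁻¹ * C1 Y X₁ X₂ ∧
    beta2S ystar Ystar X₁ X₂ - betaOLS ystar Ystar X₁
      = R₁₁ • (R₂₂⁻¹ *ᵥ (beta2S y Y X₁ X₂ - betaOLS y Y X₁)) ∧
    Dhat Ystar X₁ X₂ = R₂₂⁻¹ * Dhat Y X₁ X₂ * (R₂₂⁻¹)ᵀ ∧
    sigHat2 ystar Ystar X₁ = R₁₁ ^ 2 * sigHat2 y Y X₁ ∧
    sigTil2 ystar Ystar X₁ X₂ = R₁₁ ^ 2 * sigTil2 y Y X₁ X₂ ∧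
    sigTil1sq ystar Ystar X₁ X₂ = R₁₁ ^ 2 * sigTil1sq y Y X₁ X₂ ∧
    sigTil2sq ystar Ystar X₁ X₂ = R₁₁ ^ 2 * sigTil2sq y Y X₁ X₂ ∧
    (sigTil1sq y Y X₁ X₂ ≠ 0 →
      ((k₂ : ℝ) - (G : ℝ)) / (G : ℝ) *
          ((beta2S ystar Ystar X₁ X₂ - betaOLS ystar Ystar X₁) ⬝ᵥ
            ((sigTil1sq ystar Ystar X₁ X₂ • Dhat Ystar X₁ X₂)⁻¹ *ᵥ
              (beta2S ystar Ystar X₁ X₂ - betaOLS ystar Ystar X₁)))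
        = ((k₂ : ℝ) - (G : ℝ)) / (G : ℝ) *
            ((beta2S y Y X₁ X₂ - betaOLS y Y X₁) ⬝ᵥ
              ((sigTil1sq y Y X₁ X₂ • Dhat Y X₁ X₂)⁻¹ *ᵥ
                (beta2S y Y X₁ X₂ - betaOLS y Y X₁)))) ∧
    (sigTil2sq y Y X₁ X₂ ≠ 0 →
      ((T : ℝ) - (k₁ : ℝ) - 2 * (G : ℝ)) / (G : ℝ) *
          ((beta2S ystar Ystar X₁ X₂ - betaOLS ystar Ystar X₁) ⬝ᵥ
            ((sigTil2sq ystar Ystar X₁ X₂ • Dhat Ystar X₁ X₂)⁻¹ *ᵥ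
              (beta2S ystar Ystar X₁ X₂ - betaOLS ystar Ystar X₁)))
        = ((T : ℝ) - (k₁ : ℝ) - 2 * (G : ℝ)) / (G : ℝ) *
            ((beta2S y Y X₁ X₂ - betaOLS y Y X₁) ⬝ᵥ
              ((sigTil2sq y Y X₁ X₂ • Dhat Y X₁ X₂)⁻¹ *ᵥ
                (beta2S y Y X₁ X₂ - betaOLS y Y X₁)))) ∧
    (sigTil2 y Y X₁ X₂ ≠ 0 →
      ((T : ℝ) - (k₁ : ℝ) - (G : ℝ)) *
          ((beta2S ystar Ystar X₁ X₂ - betaOLS ystar Ystar X₁) ⬝ᵥ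
            ((sigTil2 ystar Ystar X₁ X₂ • Dhat Ystar X₁ X₂)⁻¹ *ᵥ
              (beta2S ystar Ystar X₁ X₂ - betaOLS ystar Ystar X₁)))
        = ((T : ℝ) - (k₁ : ℝ) - (G : ℝ)) *
            ((beta2S y Y X₁ X₂ - betaOLS y Y X₁) ⬝ᵥ
              ((sigTil2 y Y X₁ X₂ • Dhat Y X₁ X₂)⁻¹ *ᵥ
                (beta2S y Y X₁ X₂ - betaOLS y Y X₁)))) ∧
    (sigHat2 y Y X₁ ≠ 0 →
      ((T : ℝ) - (k₁ : ℝ) - (G : ℝ)) *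
          ((beta2S ystar Ystar X₁ X₂ - betaOLS ystar Ystar X₁) ⬝ᵥ
            ((sigHat2 ystar Ystar X₁ • Dhat Ystar X₁ X₂)⁻¹ *ᵥ
              (beta2S ystar Ystar X₁ X₂ - betaOLS ystar Ystar X₁)))
        = ((T : ℝ) - (k₁ : ℝ) - (G : ℝ)) *
            ((beta2S y Y X₁ X₂ - betaOLS y Y X₁) ⬝ᵥ
              ((sigHat2 y Y X₁ • Dhat Y X₁ X₂)⁻¹ *ᵥ
                (beta2S y Y X₁ X₂ - betaOLS y Y X₁)))) ∧
    (IsUnit (sigTil2 y Y X₁ X₂ • (OmIV Y X₁ X₂)⁻¹ - sigHat2 y Y X₁ • (OmLS Y X₁)⁻¹) →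
      (T : ℝ) *
          ((beta2S ystar Ystar X₁ X₂ - betaOLS ystar Ystar X₁) ⬝ᵥ
            ((sigTil2 ystar Ystar X₁ X₂ • (OmIV Ystar X₁ X₂)⁻¹ -
                sigHat2 ystar Ystar X₁ • (OmLS Ystar X₁)⁻¹)⁻¹ *ᵥ
              (beta2S ystar Ystar X₁ X₂ - betaOLS ystar Ystar X₁)))
        = (T : ℝ) *
            ((beta2S y Y X₁ X₂ - betaOLS y Y X₁) ⬝ᵥ
              ((sigTil2 y Y X₁ X₂ • (OmIV Y X₁ X₂)⁻¹ -
                  sigHat2 y Y X₁ • (OmLS Y X₁)⁻¹)⁻¹ *ᵥ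
                (beta2S y Y X₁ X₂ - betaOLS y Y X₁)))) ∧
    (sigTil2 y Y X₁ X₂ ≠ 0 →
      (T : ℝ) *
          ((beta2S ystar Ystar X₁ X₂ - betaOLS ystar Ystar X₁) ⬝ᵥ
            ((sigTil2 ystar Ystar X₁ X₂ • Dhat Ystar X₁ X₂)⁻¹ *ᵥ
              (beta2S ystar Ystar X₁ X₂ - betaOLS ystar Ystar X₁)))
        = (T : ℝ) *
            ((beta2S y Y X₁ X₂ - betaOLS y Y X₁) ⬝ᵥ
              ((sigTil2 y Y X₁ X₂ • Dhat Y X₁ X₂)⁻¹ *ᵥ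
                (beta2S y Y X₁ X₂ - betaOLS y Y X₁)))) ∧
    (sigHat2 y Y X₁ ≠ 0 →
      (T : ℝ) *
          ((beta2S ystar Ystar X₁ X₂ - betaOLS ystar Ystar X₁) ⬝ᵥ
            ((sigHat2 ystar Ystar X₁ • Dhat Ystar X₁ X₂)⁻¹ *ᵥ
              (beta2S ystar Ystar X₁ X₂ - betaOLS ystar Ystar X₁)))
        = (T : ℝ) *
            ((beta2S y Y X₁ X₂ - betaOLS y Y X₁) ⬝ᵥ
              ((sigHat2 y Y X₁ • Dhat Y X₁ X₂)⁻¹ *ᵥ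
                (beta2S y Y X₁ X₂ - betaOLS y Y X₁)))) ∧
    (y ⬝ᵥ (LamR Y X₁ X₂ *ᵥ y) ≠ 0 →
      ((T : ℝ) - (k₁ : ℝ) - (k₂ : ℝ) - (G : ℝ)) / (k₂ : ℝ) *
          (ystar ⬝ᵥ (PsiR Ystar X₁ X₂ *ᵥ ystar) /
            (ystar ⬝ᵥ (LamR Ystar X₁ X₂ *ᵥ ystar)))
        = ((T : ℝ) - (k₁ : ℝ) - (k₂ : ℝ) - (G : ℝ)) / (k₂ : ℝ) *
            (y ⬝ᵥ (PsiR Y X₁ X₂ *ᵥ y) / (y ⬝ᵥ (LamR Y X₁ X₂ *ᵥ y)))) :=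
  stmt16_general y Y X₁ X₂ hrank R₁₁ hR₁₁ R₂₁ R₂₂ hR₂₂ ystar hystar Ystar hYstar
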